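/- arXiv:1912.09698 — 3 statements merged into one kernel-verified Lean document; each statement's English description precedes it below -/
import Mathlib

section
/- Let $w \in \mathbb{R}$, $k \ge 1$ an integer, $\alpha \in (-1,1)$, and let $g \in C^1[0,a]$ satisfy $g(0)=0$ and $g'(x)>0$ on $[0,a]$, with $g$ independent of $w$. If $f \in C[0,a]$ and $q$ solves the ODE $g(x)q'(x) + [k+\alpha + i w g(x)] g'(x) q(x) = f(x)$ on $(0,a]$ with $q(0)=0$, then there exists a constant $C$ depending only on $g$, $a$, $k$, $\alpha$ (independent of $w$) such that $\|q\|_\infty \le C \|f\|_\infty$. -/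
/-!
Multiplying the equation by the integrating factor `g^(β-1) e^{iwg}`, with `β = k + α > 0`,
turns it into `(g^β e^{iwg} q)' = g^(β-1) e^{iwg} f`. Since `|e^{iwg}| = 1` and `g' ≥ c > 0`,
the right-hand side is bounded in norm by `(M / c) g^(β-1) g' = (M / (β c) g^β)'`, so comparing
with this barrier from `0`, where both vanish, gives `g^β |q| ≤ M / (β c) g^β`. The frequency `w`
only enters through the unimodular factor, which is why the constant does not depend on it.
-/

open Set Filter Topology Complex

theorem image_norm_le_of_norm_deriv_le_deriv_boundary_Ioo {E : Type*} [NormedAddCommGroup E]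
    [NormedSpace ℝ E] {f f' : ℝ → E} {B B' : ℝ → ℝ} {a b : ℝ} (hab : a ≤ b)
    (hf : ContinuousOn f (Icc a b)) (hf' : ∀ t ∈ Ioo a b, HasDerivAt f (f' t) t)
    (hB : ContinuousOn B (Icc a b)) (hB' : ∀ t ∈ Ioo a b, HasDerivAt B (B' t) t)
    (bound : ∀ t ∈ Ioo a b, ‖f' t‖ ≤ B' t) (ha : ‖f a‖ ≤ B a) : ‖f b‖ ≤ B b := by
  rcases hab.eq_or_lt with rfl | hab
  · exact ha
  have hIoo : ∀ {ε}, ε ∈ Ioo a b → Ico ε b ⊆ Ioo a b := fun hε t ht => ⟨hε.1.trans_le ht.1, ht.2⟩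
  -- Fence on `[ε, b]`, where the right derivative at `ε` exists, then let `ε → a⁺`.
  have key : ∀ ε ∈ Ioo a b, ‖f b‖ - B b ≤ ‖f ε‖ - B ε := by
    intro ε hε
    have hsub : Icc ε b ⊆ Icc a b := Icc_subset_Icc hε.1.le le_rfl
    have := image_norm_le_of_norm_deriv_right_le_deriv_boundary' (hf.mono hsub)
      (fun t ht => (hf' t (hIoo hε ht)).hasDerivWithinAt)
      (B := fun t => B t + (‖f ε‖ - B ε)) (by simp) ((hB.mono hsub).add continuousOn_const)
      (fun t ht => ((hB' t (hIoo hε ht)).add_const _).hasDerivWithinAt)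
      (fun t ht => bound t (hIoo hε ht)) ⟨hε.2.le, le_rfl⟩
    linarith
  have hnhds : 𝓝[>] a ≤ 𝓝[Icc a b] a := by
    rw [← nhdsWithin_Ioc_eq_nhdsGT hab]
    exact nhdsWithin_mono a Ioc_subset_Icc_self
  have hlim : Tendsto (fun ε => ‖f ε‖ - B ε) (𝓝[>] a) (𝓝 (‖f a‖ - B a)) :=
    (((hf a ⟨le_rfl, hab.le⟩).norm).sub (hB a ⟨le_rfl, hab.le⟩)).mono_left hnhds
  have := ge_of_tendsto hlim (by filter_upwards [Ioo_mem_nhdsGT hab] using key)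
  linarith

theorem strictMonoOn_Icc_of_hasDerivWithinAt_pos {g g' : ℝ → ℝ} {a b : ℝ}
    (hderiv : ∀ x ∈ Icc a b, HasDerivWithinAt g (g' x) (Icc a b) x)
    (hpos : ∀ x ∈ Icc a b, 0 < g' x) : StrictMonoOn g (Icc a b) :=
  strictMonoOn_of_hasDerivWithinAt_pos (convex_Icc a b)
    (fun x hx => (hderiv x hx).continuousWithinAt)
    (fun x hx => (hderiv x (interior_subset hx)).mono interior_subset)
    (fun x hx => hpos x (interior_subset hx))

theorem hasDerivAt_integratingFactor_mul {g : ℝ → ℝ} {q : ℝ → ℂ} {g' : ℝ} {q' : ℂ}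
    {β w t : ℝ} (hgt : 0 < g t) (hg : HasDerivAt g g' t) (hq : HasDerivAt q q' t) :
    HasDerivAt (fun s => ((g s ^ β : ℝ) : ℂ) * exp (↑(w * g s) * I) * q s)
      (((g t ^ (β - 1) : ℝ) : ℂ) * exp (↑(w * g t) * I) *
        (g t * q' + (β + I * w * g t) * g' * q t)) t := by
  have hpow : HasDerivAt (fun s => ((g s ^ β : ℝ) : ℂ)) ((g' * β * g t ^ (β - 1) : ℝ) : ℂ) t :=
    (hg.rpow_const (Or.inl hgt.ne')).ofReal_comp
  have hexp : HasDerivAt (fun s => exp (↑(w * g s) * I))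
      (exp (↑(w * g t) * I) * (↑(w * g') * I)) t :=
    ((hg.const_mul w).ofReal_comp.mul_const I).cexp
  have hsplit : ((g t ^ β : ℝ) : ℂ) = ((g t ^ (β - 1) : ℝ) : ℂ) * g t := by
    rw [← ofReal_mul, ← Real.rpow_add_one hgt.ne', sub_add_cancel]
  refine ((hpow.mul hexp).mul hq).congr_deriv ?_
  simp only [Pi.mul_apply, hsplit]
  push_cast
  ring

theorem norm_le_of_singular_ode {g g' : ℝ → ℝ} {q q' f : ℝ → ℂ} {β c w M x : ℝ}
    (hβ : 0 < β) (hc : 0 < c) (hx : 0 < x)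
    (hg : ContinuousOn g (Icc 0 x)) (hg0 : g 0 = 0) (hgpos : ∀ t ∈ Ioc 0 x, 0 < g t)
    (hg' : ∀ t ∈ Ioo 0 x, HasDerivAt g (g' t) t) (hcg' : ∀ t ∈ Ioo 0 x, c ≤ g' t)
    (hq : ContinuousOn q (Icc 0 x)) (hq0 : q 0 = 0) (hq' : ∀ t ∈ Ioo 0 x, HasDerivAt q (q' t) t)
    (hode : ∀ t ∈ Ioo 0 x, (g t : ℂ) * q' t + (β + I * w * g t) * g' t * q t = f t)
    (hf : ∀ t ∈ Ioo 0 x, ‖f t‖ ≤ M) :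
    ‖q x‖ ≤ M / (β * c) := by
  have hM : 0 ≤ M := (norm_nonneg _).trans (hf (x / 2) ⟨by linarith, by linarith⟩)
  have hgt : ∀ t ∈ Ioo 0 x, 0 < g t := fun t ht => hgpos t ⟨ht.1, ht.2.le⟩
  have hgβ : ContinuousOn (fun t => g t ^ β) (Icc 0 x) := hg.rpow_const fun _ _ => Or.inr hβ.le
  have hcomp := image_norm_le_of_norm_deriv_le_deriv_boundary_Ioo hx.le
    (f := fun s => ((g s ^ β : ℝ) : ℂ) * exp (↑(w * g s) * I) * q s)
    (B := fun t => M / (β * c) * g t ^ β) (B' := fun t => M / c * (g t ^ (β - 1) * g' t))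
    ((continuous_ofReal.comp_continuousOn hgβ).mul
      ((continuous_ofReal.comp_continuousOn (continuousOn_const.mul hg)).mul_const I).cexp
      |>.mul hq)
    (fun t ht => hasDerivAt_integratingFactor_mul (hgt t ht) (hg' t ht) (hq' t ht))
    (continuousOn_const.mul hgβ)
    (fun t ht => by
      refine (((hg' t ht).rpow_const (p := β) (Or.inl (hgt t ht).ne')).const_mul
        (M / (β * c))).congr_deriv ?_
      field_simp)
    (fun t ht => by
      have hgt' := (Real.rpow_pos_of_pos (hgt t ht) (β - 1)).le
      rw [hode t ht, norm_mul, norm_mul, norm_exp_ofReal_mul_I, norm_real, Real.norm_of_nonneg hgt']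
      calc g t ^ (β - 1) * 1 * ‖f t‖ ≤ g t ^ (β - 1) * M := by
            rw [mul_one]; exact mul_le_mul_of_nonneg_left (hf t ht) hgt'
        _ = M / c * (g t ^ (β - 1) * c) := by field_simp
        _ ≤ M / c * (g t ^ (β - 1) * g' t) := by gcongr; exact hcg' t ht)
    (by simp [hq0, hg0, Real.zero_rpow hβ.ne'])
  have hgx := Real.rpow_pos_of_pos (hgpos x ⟨hx, le_rfl⟩) β
  rw [norm_mul, norm_mul, norm_exp_ofReal_mul_I, norm_real, Real.norm_of_nonneg hgx.le, mul_one,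
    mul_comm (M / _)] at hcomp
  exact le_of_mul_le_mul_left hcomp hgx

open Complex in
/-- For the singular ODE `g q' + (k+α+iwg) g' q = f` with `q 0 = 0`, there is a
constant `C` depending only on `g, a, k, α` (independent of `w`, `f`, `q`) such that
`‖q‖_∞ ≤ C ‖f‖_∞`. -/
theorem stmt_1 (a : ℝ) (ha : 0 < a) (k : ℕ) (hk : 1 ≤ k) (α : ℝ) (hα : α ∈ Set.Ioo (-1 : ℝ) 1)
    (g g' : ℝ → ℝ)
    (hderiv : ∀ x ∈ Set.Icc 0 a, HasDerivWithinAt g (g' x) (Set.Icc 0 a) x)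
    (hgc : ContinuousOn g' (Set.Icc 0 a))
    (hg0 : g 0 = 0) (hgpos : ∀ x ∈ Set.Icc 0 a, 0 < g' x) :
    ∃ C : ℝ, ∀ (w : ℝ) (f q : ℝ → ℂ) (q' : ℝ → ℂ),
      ContinuousOn f (Set.Icc 0 a) →
      ContinuousOn q (Set.Icc 0 a) →
      (∀ x ∈ Set.Ioc 0 a, HasDerivAt q (q' x) x) →
      (∀ x ∈ Set.Ioc 0 a,
        (g x : ℂ) * q' x + ((k : ℂ) + (α : ℂ) + I * (w : ℂ) * (g x : ℂ)) * (g' x : ℂ) * q x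
          = f x) →
      q 0 = 0 →
      ∀ M : ℝ, (∀ t ∈ Set.Icc 0 a, ‖f t‖ ≤ M) →
        ∀ x ∈ Set.Icc 0 a, ‖q x‖ ≤ C * M := by
  set β : ℝ := k + α
  have hβ : 0 < β := by
    have : (1 : ℝ) ≤ k := by exact_mod_cast hk
    linarith [hα.1]
  obtain ⟨t₀, ht₀, hmin⟩ := isCompact_Icc.exists_isMinOn ⟨0, le_rfl, ha.le⟩ hgc
  have hc := hgpos t₀ ht₀
  have hmono := strictMonoOn_Icc_of_hasDerivWithinAt_pos hderiv hgpos
  refine ⟨1 / (β * g' t₀), fun w f q q' _ hqc hq' hode hq0 M hM x hx => ?_⟩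
  rcases hx.1.eq_or_lt with rfl | hx0
  · have := (norm_nonneg _).trans (hM 0 ⟨le_rfl, ha.le⟩)
    rw [hq0, norm_zero]
    positivity
  have hsub : Icc 0 x ⊆ Icc 0 a := Icc_subset_Icc le_rfl hx.2
  have hIoo : Ioo 0 x ⊆ Ioo 0 a := Ioo_subset_Ioo le_rfl hx.2
  rw [one_div_mul_eq_div]
  refine norm_le_of_singular_ode (w := w) hβ hc hx0
    (fun t ht => (hderiv t (hsub ht)).continuousWithinAt.mono hsub) hg0
    (fun t ht => hg0 ▸ hmono ⟨le_rfl, ha.le⟩ (hsub (Ioc_subset_Icc_self ht)) ht.1)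
    (fun t ht => (hderiv t (Ioo_subset_Icc_self (hIoo ht))).hasDerivAt
      (Icc_mem_nhds (hIoo ht).1 (hIoo ht).2))
    (fun t ht => hmin (Ioo_subset_Icc_self (hIoo ht))) (hqc.mono hsub) hq0
    (fun t ht => hq' t (Ioo_subset_Ioc_self (hIoo ht))) (fun t ht => ?_)
    (fun t ht => hM t (Ioo_subset_Icc_self (hIoo ht)))
  rw [← hode t (Ioo_subset_Ioc_self (hIoo ht))]
  push_cast [β]
  ring
end

section
/- (van der Corput-type bound with algebraic singularity) Let $\alpha \in (-1,\infty)$ and $\eta \in C^1[0,a]$. Then there is a constant $C$ depending only on $\alpha$ and $a$ (not on $w$ or $\eta$) such that for all $w \ge 1$, $\left|\int_0^a \eta(x)\, x^\alpha e^{i w x}\,dx\right| \le C\, w^{-\min\{1+\alpha,\,1\}}\left(|\eta(a)| + \int_0^a |\eta'(x)|\,dx\right)$. -/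
/-!
Write `G(t) = ∫₀ᵗ x^α e^{iwx} dx`. Integrating by parts against `η` bounds the integral by
`sup_{[0,a]} ‖G‖ · (‖η a‖ + ∫₀ᵃ ‖η'‖)`, so it suffices to show `‖G t‖ ≲ w^{-min(1+α,1)}`.
Split at `c = 1/w`: on `[0, c]` the trivial bound gives `c^{1+α}/(1+α) = w^{-(1+α)}/(1+α)`.
On `[c, t]` the same integration by parts, now with amplitude `x^α` and the primitive of
`e^{iwx}` bounded by `2/w`, gives `(2/w)(t^α + |t^α - c^α|)`, because `x^α` is monotone and so
its total variation is `|t^α - c^α|`; this is `O(w⁻¹ + w^{-(1+α)})`.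
-/

open Complex MeasureTheory Set intervalIntegral

theorem norm_integral_mul_le_of_norm_primitive_le {A : Type*} [NormedRing A] [NormedAlgebra ℝ A]
    [CompleteSpace A] {a b M : ℝ} (hab : a ≤ b) {η η' g : ℝ → A}
    (hη : ∀ x ∈ Icc a b, HasDerivWithinAt η (η' x) (Icc a b) x)
    (hη' : IntervalIntegrable η' volume a b) (hg : IntervalIntegrable g volume a b)
    (hgc : ContinuousOn g (Ioo a b)) (hG : ∀ t ∈ Icc a b, ‖∫ x in a..t, g x‖ ≤ M) :
    ‖∫ x in a..b, η x * g x‖ ≤ M * (‖η b‖ + ∫ x in a..b, ‖η' x‖) := by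
  set G : ℝ → A := fun t => ∫ x in a..t, g x
  have hIcc : uIcc a b = Icc a b := uIcc_of_le hab
  have hIoo : Ioo (min a b) (max a b) = Ioo a b := by rw [min_eq_left hab, max_eq_right hab]
  have hGc : ContinuousOn G (Icc a b) := by
    rw [← hIcc]; exact continuousOn_primitive_interval' hg left_mem_uIcc
  have hparts : ∫ x in a..b, η x * g x = η b * G b - ∫ x in a..b, η' x * G x := by
    rw [integral_mul_deriv_eq_deriv_mul_of_hasDeriv_right (v := G)
      (hIcc ▸ fun x hx => (hη x hx).continuousWithinAt) (hIcc ▸ hGc)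
      (fun x hx => ?_) (fun x hx => ?_) hη' hg, show G a = 0 from integral_same, mul_zero,
      sub_zero]
    · rw [hIoo] at hx
      exact ((hη x (Ioo_subset_Icc_self hx)).hasDerivAt
        (Icc_mem_nhds hx.1 hx.2)).hasDerivWithinAt
    · rw [hIoo] at hx
      have hgx : IntervalIntegrable g volume a x :=
        hg.mono_set (by rw [uIcc_of_le hx.1.le, hIcc]; exact Icc_subset_Icc_right hx.2.le)
      exact (integral_hasDerivAt_right hgx
        (hgc.stronglyMeasurableAtFilter isOpen_Ioo x hx)
        (hgc.continuousAt (isOpen_Ioo.mem_nhds hx))).hasDerivWithinAt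
  have hrem : ‖∫ x in a..b, η' x * G x‖ ≤ M * ∫ x in a..b, ‖η' x‖ := calc
    ‖∫ x in a..b, η' x * G x‖ ≤ ∫ x in a..b, ‖η' x * G x‖ := norm_integral_le_integral_norm hab
    _ ≤ ∫ x in a..b, M * ‖η' x‖ := by
      refine integral_mono_on hab (hη'.mul_continuousOn (hIcc ▸ hGc)).norm
        (hη'.norm.const_mul M) fun x hx => ?_
      rw [mul_comm M]
      exact (norm_mul_le _ _).trans (mul_le_mul_of_nonneg_left (hG x hx) (norm_nonneg _))
    _ = M * ∫ x in a..b, ‖η' x‖ := integral_const_mul M _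
  have hend : ‖η b * G b‖ ≤ M * ‖η b‖ := by
    rw [mul_comm M]
    exact (norm_mul_le _ _).trans
      (mul_le_mul_of_nonneg_left (hG b (right_mem_Icc.2 hab)) (norm_nonneg _))
  rw [hparts, mul_add]
  exact (norm_sub_le _ _).trans (add_le_add hend hrem)

theorem IntervalIntegrable.ofReal {f : ℝ → ℝ} {μ : Measure ℝ} {a b : ℝ}
    (hf : IntervalIntegrable f μ a b) : IntervalIntegrable (fun x => (f x : ℂ)) μ a b :=
  ⟨hf.1.ofReal, hf.2.ofReal⟩

theorem norm_integral_exp_I_mul_le {w : ℝ} (hw : 0 < w) (c t : ℝ) :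
    ‖∫ x in c..t, exp (I * w * x)‖ ≤ 2 / w := by
  have hIw : I * (w : ℂ) ≠ 0 := mul_ne_zero I_ne_zero (ofReal_ne_zero.2 hw.ne')
  have hexp (x : ℝ) : ‖exp (I * w * x)‖ = 1 := by
    rw [norm_exp]; simp
  rw [integral_exp_mul_complex hIw, norm_div, norm_mul, norm_I, one_mul, norm_real,
    Real.norm_of_nonneg hw.le]
  gcongr
  exact (norm_sub_le _ _).trans_eq (by rw [hexp, hexp]; norm_num)

theorem integral_abs_deriv_rpow {c t : ℝ} (hc : 0 < c) (hct : c ≤ t) (α : ℝ) :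
    ∫ x in c..t, |α * x ^ (α - 1)| = |t ^ α - c ^ α| := by
  have hpos : ∀ x ∈ uIcc c t, 0 < x := fun x hx => hc.trans_le (uIcc_of_le hct ▸ hx).1
  have hftc : ∫ x in c..t, α * x ^ (α - 1) = t ^ α - c ^ α :=
    integral_eq_sub_of_hasDerivAt
      (fun x hx => Real.hasDerivAt_rpow_const (Or.inl (hpos x hx).ne'))
      ((intervalIntegrable_rpow (Or.inr (notMem_uIcc_of_lt hc (hc.trans_le hct)))).const_mul α)
  have hnonneg : 0 ≤ ∫ x in c..t, x ^ (α - 1) :=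
    integral_nonneg hct fun x hx => Real.rpow_nonneg (hc.le.trans hx.1) _
  calc ∫ x in c..t, |α * x ^ (α - 1)| = ∫ x in c..t, |α| * x ^ (α - 1) :=
        integral_congr fun x hx => by
          rw [abs_mul, abs_of_nonneg (Real.rpow_nonneg (hpos x hx).le _)]
    _ = |∫ x in c..t, α * x ^ (α - 1)| := by
        rw [intervalIntegral.integral_const_mul, intervalIntegral.integral_const_mul, abs_mul,
          abs_of_nonneg hnonneg]
    _ = |t ^ α - c ^ α| := by rw [hftc]

theorem norm_integral_rpow_mul_exp_I_mul_le {c t w : ℝ} (hc : 0 < c) (hct : c ≤ t) (hw : 0 < w)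
    (α : ℝ) :
    ‖∫ x in c..t, ((x ^ α : ℝ) : ℂ) * exp (I * w * x)‖ ≤ 2 / w * (t ^ α + |t ^ α - c ^ α|) := by
  have hpos : ∀ x ∈ Icc c t, 0 < x := fun x hx => hc.trans_le hx.1
  have hderiv : ∀ x ∈ Icc c t, HasDerivWithinAt (fun y : ℝ => ((y ^ α : ℝ) : ℂ))
      (((α * x ^ (α - 1) : ℝ) : ℂ)) (Icc c t) x := fun x hx =>
    (Real.hasDerivAt_rpow_const (Or.inl (hpos x hx).ne')).ofReal_comp.hasDerivWithinAt
  have hderiv_int : IntervalIntegrable (fun x : ℝ => ((α * x ^ (α - 1) : ℝ) : ℂ)) volume c t :=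
    ((intervalIntegrable_rpow
      (Or.inr (notMem_uIcc_of_lt hc (hc.trans_le hct)))).const_mul α).ofReal
  have hexp : Continuous fun x : ℝ => exp (I * w * x) := by fun_prop
  have h := norm_integral_mul_le_of_norm_primitive_le hct hderiv hderiv_int
    (hexp.intervalIntegrable c t) hexp.continuousOn
    (fun s _ => norm_integral_exp_I_mul_le hw c s)
  simpa only [norm_real, Real.norm_eq_abs, abs_of_pos (Real.rpow_pos_of_pos (hc.trans_le hct) α),
    integral_abs_deriv_rpow hc hct] using h

theorem norm_integral_rpow_mul_exp_I_mul_le_of_nonneg {u : ℝ} (hu : 0 ≤ u) {α : ℝ} (hα : -1 < α)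
    (w : ℝ) :
    ‖∫ x in (0 : ℝ)..u, ((x ^ α : ℝ) : ℂ) * exp (I * w * x)‖ ≤ u ^ (α + 1) / (α + 1) := calc
  _ ≤ ∫ x in (0 : ℝ)..u, ‖((x ^ α : ℝ) : ℂ) * exp (I * w * x)‖ :=
      norm_integral_le_integral_norm hu
  _ = ∫ x in (0 : ℝ)..u, x ^ α := integral_congr fun x hx => by
      rw [uIcc_of_le hu] at hx
      rw [norm_mul, norm_real, Real.norm_of_nonneg (Real.rpow_nonneg hx.1 α), norm_exp]
      simp
  _ = u ^ (α + 1) / (α + 1) := by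
      rw [integral_rpow (Or.inl hα), Real.zero_rpow (by linarith), sub_zero]

theorem intervalIntegrable_rpow_mul_exp_I_mul {α : ℝ} (hα : -1 < α) (w c t : ℝ) :
    IntervalIntegrable (fun x : ℝ => ((x ^ α : ℝ) : ℂ) * exp (I * w * x)) volume c t :=
  (intervalIntegrable_rpow' hα).ofReal.mul_continuousOn (by fun_prop)

theorem Real.rpow_le_rpow_add_rpow_of_mem_Icc {c t a : ℝ} (hc : 0 < c) (ht : t ∈ Icc c a) (α : ℝ) :
    t ^ α ≤ c ^ α + a ^ α := by
  have hc' : 0 ≤ c ^ α := Real.rpow_nonneg hc.le α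
  have ha' : 0 ≤ a ^ α := Real.rpow_nonneg (hc.le.trans (ht.1.trans ht.2)) α
  rcases le_total 0 α with hα | hα
  · linarith [Real.rpow_le_rpow (hc.le.trans ht.1) ht.2 hα]
  · linarith [Real.rpow_le_rpow_of_nonpos hc ht.1 hα]

theorem norm_integral_rpow_mul_exp_I_mul_le_rpow_neg {a t w α : ℝ} (hα : -1 < α) (ht : t ∈ Icc 0 a)
    (hw : 1 ≤ w) :
    ‖∫ x in (0 : ℝ)..t, ((x ^ α : ℝ) : ℂ) * exp (I * w * x)‖
      ≤ (1 / (1 + α) + 4 * a ^ α + 6) * w ^ (-(min (1 + α) 1)) := by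
  set m := min (1 + α) 1
  have hw0 : 0 < w := one_pos.trans_le hw
  have hwα : w ^ (-(1 + α)) ≤ w ^ (-m) :=
    Real.rpow_le_rpow_of_exponent_le hw (neg_le_neg (min_le_left _ _))
  have hw1 : w⁻¹ ≤ w ^ (-m) := by
    simpa [Real.rpow_neg_one] using
      Real.rpow_le_rpow_of_exponent_le hw (neg_le_neg (min_le_right (1 + α) 1))
  have ha : 0 ≤ a ^ α := Real.rpow_nonneg (ht.1.trans ht.2) α
  set c := w⁻¹
  have hc : 0 < c := inv_pos.2 hw0
  have hcα : c ^ α * c = w ^ (-(1 + α)) := by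
    rw [← Real.rpow_add_one hc.ne', Real.inv_rpow hw0.le, ← Real.rpow_neg hw0.le, add_comm]
  have hsmall : ∀ u ∈ Icc 0 c,
      ‖∫ x in (0 : ℝ)..u, ((x ^ α : ℝ) : ℂ) * exp (I * w * x)‖ ≤ 1 / (1 + α) * w ^ (-m) :=
    fun u hu => calc
      _ ≤ u ^ (α + 1) / (α + 1) := norm_integral_rpow_mul_exp_I_mul_le_of_nonneg hu.1 hα w
      _ ≤ c ^ (α + 1) / (α + 1) := by gcongr <;> linarith [hu.1, hu.2]
      _ = w ^ (-(1 + α)) / (1 + α) := by rw [Real.rpow_add_one hc.ne', hcα, add_comm α 1]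
      _ ≤ 1 / (1 + α) * w ^ (-m) := by rw [one_div_mul_eq_div]; gcongr; linarith
  rcases le_or_gt t c with htc | hct
  · exact (hsmall t ⟨ht.1, htc⟩).trans
      (by nlinarith [Real.rpow_pos_of_pos hw0 (-m)])
  have hosc : ‖∫ x in c..t, ((x ^ α : ℝ) : ℂ) * exp (I * w * x)‖ ≤ (4 * a ^ α + 6) * w ^ (-m) :=
    calc _ ≤ 2 / w * (t ^ α + |t ^ α - c ^ α|) :=
          norm_integral_rpow_mul_exp_I_mul_le hc hct.le hw0 α
      _ ≤ 2 / w * (2 * (c ^ α + a ^ α) + c ^ α) := by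
          have htα := Real.rpow_le_rpow_add_rpow_of_mem_Icc hc ⟨hct.le, ht.2⟩ α
          have hdiff : |t ^ α - c ^ α| ≤ t ^ α + c ^ α := abs_sub_le_iff.2
            ⟨by linarith [Real.rpow_nonneg hc.le α], by linarith [Real.rpow_nonneg ht.1 α]⟩
          exact mul_le_mul_of_nonneg_left (by linarith) (by positivity)
      _ = 4 * a ^ α * c + 6 * (c ^ α * c) := by ring
      _ ≤ (4 * a ^ α + 6) * w ^ (-m) := by
          rw [hcα]
          nlinarith [mul_le_mul_of_nonneg_left hw1 ha]
  rw [← integral_add_adjacent_intervals (intervalIntegrable_rpow_mul_exp_I_mul hα w 0 c)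
    (intervalIntegrable_rpow_mul_exp_I_mul hα w c t)]
  calc _ ≤ _ := norm_add_le _ _
    _ ≤ 1 / (1 + α) * w ^ (-m) + (4 * a ^ α + 6) * w ^ (-m) :=
        add_le_add (hsmall c ⟨hc.le, le_rfl⟩) hosc
    _ = _ := by ring

open Complex in
/-- van der Corput-type bound with algebraic singularity: there is a constant
`C` depending only on `α` and `a` such that for all `w ≥ 1` and all `η ∈ C¹[0,a]`,
`|∫_0^a η(x) x^α e^{iwx} dx| ≤ C w^{-min(1+α,1)} (|η(a)| + ∫_0^a |η'(x)| dx)`. -/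
theorem stmt_9 (a : ℝ) (ha : 0 < a) (α : ℝ) (hα : -1 < α) :
    ∃ C : ℝ, 0 < C ∧ ∀ (w : ℝ), 1 ≤ w → ∀ (η η' : ℝ → ℂ),
      (∀ x ∈ Set.Icc 0 a, HasDerivWithinAt η (η' x) (Set.Icc 0 a) x) →
      ContinuousOn η' (Set.Icc 0 a) →
      ‖∫ x in (0 : ℝ)..a, η x * ((x ^ α : ℝ) : ℂ) * Complex.exp (I * (w : ℂ) * (x : ℂ))‖
        ≤ C * w ^ (-(min (1 + α) 1)) * (‖η a‖ + ∫ x in (0 : ℝ)..a, ‖η' x‖) := by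
  have hC : 0 < 1 / (1 + α) + 4 * a ^ α + 6 := by
    have : 0 < 1 / (1 + α) := one_div_pos.2 (by linarith)
    positivity
  refine ⟨_, hC, fun w hw η η' hη hη' => ?_⟩
  have hcont : ContinuousOn (fun x : ℝ => ((x ^ α : ℝ) : ℂ) * exp (I * w * x)) (Ioo 0 a) :=
    fun x hx => ((continuous_ofReal.continuousAt.comp
      (Real.continuousAt_rpow_const x α (Or.inl hx.1.ne'))).mul (by fun_prop)).continuousWithinAt
  simp_rw [mul_assoc (η _)]
  exact norm_integral_mul_le_of_norm_primitive_le ha.le hη (hη'.intervalIntegrable_of_Icc ha.le)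
    (intervalIntegrable_rpow_mul_exp_I_mul hα w 0 a) hcont
    fun t ht => norm_integral_rpow_mul_exp_I_mul_le_rpow_neg hα ht hw
end

section
/- Let $a>0$, $\alpha \in (-1,1)\setminus\{0\}$, $w \ne 0$, and suppose $g \in C^1[0,a]$ with $g(0)=0$ and $g'>0$ on $[0,a]$. Suppose $q_1 \in C^1[0,a]$, $c_0 \in \mathbb{C}$, and $h \in C^1(0,a] \cap C[0,a]$ with $h(0)=0$ satisfies $h'(x) + i w g'(x) h(x) + \alpha c_0 g'(x)\frac{1-e^{-iwg(x)}}{g(x)^{1-\alpha}} = 0$ on $(0,a]$. Define $P(x) = \left[g(x)^{1+\alpha} q_1(x) + c_0 (1-e^{-iwg(x)}) g(x)^{\alpha} + h(x)\right] e^{iwg(x)}$. Then $P(a) - P(0) = \int_0^a \mathcal{W}[c_0, q_1](x)\, g(x)^\alpha e^{iwg(x)}\,dx$, where $\mathcal{W}[c_0,q_1](x) := i w g'(x) c_0 + g(x) q_1'(x) + [1+\alpha+iwg(x)] g'(x) q_1(x)$. -/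
/-!
Write `P = A + B` with `A = g^{1+α} q₁ e^{iwg}` and `B = (c₀ (1 - e^{-iwg}) g^α + h) e^{iwg}`.
On `(0, a]` the product rule gives `A' = (g q₁' + (1 + α + iwg) g' q₁) g^α e^{iwg}`, and in `B'`
the ODE for `h` cancels all terms containing `g^{α-1}`, leaving `B' = iwg'c₀ g^α e^{iwg}`.
Since `g' > 0` is continuous on `[0, a]`, `g` is squeezed between two linear functions, so
`g^α ≤ C x^α` is integrable for `α > -1`, and `P` extends continuously to `0` because
`|1 - e^{-iwg}| g^α ≤ |w| g^{1+α} → 0`. The fundamental theorem of calculus concludes.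
-/

open Set Complex Filter Topology MeasureTheory

theorem exists_mul_le_sub_le_mul_of_hasDerivAt_pos {a : ℝ} {g g' : ℝ → ℝ} (ha : 0 ≤ a)
    (hg : ∀ x ∈ Icc 0 a, HasDerivAt g (g' x) x) (hg'c : ContinuousOn g' (Icc 0 a))
    (hg'pos : ∀ x ∈ Icc 0 a, 0 < g' x) :
    ∃ m L, 0 < m ∧ ∀ x ∈ Icc 0 a, m * x ≤ g x - g 0 ∧ g x - g 0 ≤ L * x := by
  obtain ⟨xm, hxm, hmin⟩ := isCompact_Icc.exists_isMinOn (nonempty_Icc.2 ha) hg'c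
  obtain ⟨xL, -, hmax⟩ := isCompact_Icc.exists_isMaxOn (nonempty_Icc.2 ha) hg'c
  have hcont : ContinuousOn g (Icc 0 a) := fun x hx => (hg x hx).continuousAt.continuousWithinAt
  have hdiff : DifferentiableOn ℝ g (interior (Icc 0 a)) := fun x hx =>
    (hg x (interior_subset hx)).differentiableAt.differentiableWithinAt
  have hderiv : ∀ x ∈ interior (Icc 0 a), deriv g x = g' x := fun x hx =>
    (hg x (interior_subset hx)).deriv
  refine ⟨g' xm, g' xL, hg'pos xm hxm, fun x hx => ⟨?_, ?_⟩⟩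
  · simpa using (convex_Icc 0 a).mul_sub_le_image_sub_of_le_deriv hcont hdiff
      (fun y hy => hderiv y hy ▸ hmin (interior_subset hy)) 0 (left_mem_Icc.2 ha) x hx hx.1
  · simpa using (convex_Icc 0 a).image_sub_le_mul_sub_of_deriv_le hcont hdiff
      (fun y hy => hderiv y hy ▸ hmax (interior_subset hy)) 0 (left_mem_Icc.2 ha) x hx hx.1

theorem rpow_le_of_mul_le_of_le_mul {m L x y α : ℝ} (hm : 0 < m) (hx : 0 < x)
    (hmy : m * x ≤ y) (hyL : y ≤ L * x) : y ^ α ≤ (m ^ α + L ^ α) * x ^ α := by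
  have hmy' : 0 < m * x := mul_pos hm hx
  have hL : 0 < L := pos_of_mul_pos_left (hmy'.trans_le (hmy.trans hyL)) hx.le
  rcases le_total α 0 with hα | hα
  · have := Real.rpow_le_rpow_of_nonpos hmy' hmy hα
    rw [Real.mul_rpow hm.le hx.le] at this
    nlinarith [Real.rpow_nonneg hx.le α, Real.rpow_nonneg hL.le α]
  · have := Real.rpow_le_rpow (hmy'.le.trans hmy) hyL hα
    rw [Real.mul_rpow hL.le hx.le] at this
    nlinarith [Real.rpow_nonneg hx.le α, Real.rpow_nonneg hm.le α]

theorem intervalIntegrable_rpow_of_mul_le_of_le_mul {a m L α : ℝ} {g : ℝ → ℝ} (hα : -1 < α)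
    (ha : 0 ≤ a) (hm : 0 < m) (hg : ContinuousOn g (Ioc 0 a))
    (hbound : ∀ x ∈ Ioc 0 a, m * x ≤ g x ∧ g x ≤ L * x) :
    IntervalIntegrable (fun x => g x ^ α) volume 0 a := by
  rw [intervalIntegrable_iff_integrableOn_Ioc_of_le ha]
  have hdom := (intervalIntegral.intervalIntegrable_rpow' hα (a := 0) (b := a)).const_mul
    (m ^ α + L ^ α)
  rw [intervalIntegrable_iff_integrableOn_Ioc_of_le ha] at hdom
  have hgpos : ∀ x ∈ Ioc 0 a, 0 < g x := fun x hx => (mul_pos hm hx.1).trans_le (hbound x hx).1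
  refine hdom.mono' ((hg.rpow_const fun x hx => Or.inl (hgpos x hx).ne').aestronglyMeasurable
    measurableSet_Ioc) ((ae_restrict_iff' measurableSet_Ioc).2 ?_)
  filter_upwards with x hx
  rw [Real.norm_eq_abs, abs_of_nonneg (Real.rpow_nonneg (hgpos x hx).le α)]
  exact rpow_le_of_mul_le_of_le_mul hm hx.1 (hbound x hx).1 (hbound x hx).2

theorem norm_one_sub_exp_neg_I_mul_le (w t : ℝ) : ‖1 - exp (-(I * w * t))‖ ≤ |w| * |t| := by
  have := Real.norm_exp_I_mul_ofReal_sub_one_le (x := -(w * t))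
  rw [norm_sub_rev]
  simpa [abs_mul, mul_assoc] using this

theorem continuousOn_mul_one_sub_exp_mul_rpow (w : ℝ) (c₀ : ℂ) {α : ℝ} (hα : -1 < α) :
    ContinuousOn (fun t : ℝ => c₀ * (1 - exp (-(I * w * t))) * ((t ^ α : ℝ) : ℂ)) (Ici 0) := by
  intro t ht
  rcases (mem_Ici.1 ht).eq_or_lt with rfl | htpos
  · have hlim : Tendsto (fun t : ℝ => ‖c₀‖ * |w| * t ^ (1 + α)) (𝓝[Ici 0] 0) (𝓝 0) := by
      have := ((Real.continuousAt_rpow_const 0 (1 + α) (Or.inr (by linarith))).tendsto.const_mul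
        (‖c₀‖ * |w|)).mono_left (nhdsWithin_le_nhds (s := Ici 0))
      simpa [Real.zero_rpow (by linarith : 1 + α ≠ 0)] using this
    have hbound : ∀ s ∈ Ici (0 : ℝ),
        ‖c₀ * (1 - exp (-(I * w * s))) * ((s ^ α : ℝ) : ℂ)‖ ≤ ‖c₀‖ * |w| * s ^ (1 + α) := by
      intro s (hs : 0 ≤ s)
      rw [norm_mul, norm_mul, norm_real, Real.norm_of_nonneg (Real.rpow_nonneg hs α),
        Real.rpow_add' hs (by linarith), Real.rpow_one]
      calc ‖c₀‖ * ‖1 - exp (-(I * w * s))‖ * s ^ α ≤ ‖c₀‖ * (|w| * |s|) * s ^ α := by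
            gcongr; exact norm_one_sub_exp_neg_I_mul_le w s
        _ = ‖c₀‖ * |w| * (s * s ^ α) := by rw [abs_of_nonneg hs]; ring
    simpa [ContinuousWithinAt] using
      squeeze_zero_norm' (eventually_nhdsWithin_of_forall hbound) hlim
  · exact (by fun_prop : Continuous fun t : ℝ => c₀ * (1 - exp (-(I * w * t)))).continuousAt.mul
      (continuous_ofReal.continuousAt.comp (Real.continuousAt_rpow_const t α (Or.inl htpos.ne')))
      |>.continuousWithinAt

section Derivatives

variable {g : ℝ → ℝ} {g'x x α w : ℝ}

theorem hasDerivAt_rpow_mul_mul_exp {q : ℝ → ℂ} {q'x : ℂ} (hgx : 0 < g x)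
    (hg : HasDerivAt g g'x x) (hq : HasDerivAt q q'x x) :
    HasDerivAt (fun y => ((g y ^ (1 + α) : ℝ) : ℂ) * q y * exp (I * w * g y))
      (((g x : ℂ) * q'x + (1 + α + I * w * g x) * g'x * q x) * ((g x ^ α : ℝ) : ℂ)
        * exp (I * w * g x)) x := by
  have hpow := (hg.rpow_const (p := 1 + α) (Or.inl hgx.ne')).ofReal_comp
  have hexp := (hg.ofReal_comp.const_mul (I * w)).cexp
  refine ((hpow.fun_mul hq).fun_mul hexp).congr_deriv ?_
  have hsplit : ((g x ^ (1 + α) : ℝ) : ℂ) = g x * ((g x ^ α : ℝ) : ℂ) := by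
    rw [← ofReal_mul, Real.rpow_add hgx, Real.rpow_one]
  rw [add_sub_cancel_left, hsplit]
  push_cast
  ring

theorem hasDerivAt_correction_mul_exp {h : ℝ → ℂ} {h'x c₀ : ℂ} (hgx : 0 < g x)
    (hg : HasDerivAt g g'x x) (hh : HasDerivAt h h'x x)
    (hode : h'x + I * w * g'x * h x
      + α * c₀ * g'x * ((1 - exp (-(I * w * g x))) / ((g x ^ (1 - α) : ℝ) : ℂ)) = 0) :
    HasDerivAt (fun y => (c₀ * (1 - exp (-(I * w * g y))) * ((g y ^ α : ℝ) : ℂ) + h y)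
        * exp (I * w * g y))
      (I * w * g'x * c₀ * ((g x ^ α : ℝ) : ℂ) * exp (I * w * g x)) x := by
  have hpow := (hg.rpow_const (p := α) (Or.inl hgx.ne')).ofReal_comp
  have hexp := (hg.ofReal_comp.const_mul (I * w)).cexp
  have hexp_neg := (hg.ofReal_comp.const_mul (I * w)).fun_neg.cexp
  refine (((((hexp_neg.const_sub 1).const_mul c₀).fun_mul hpow).fun_add hh).fun_mul
    hexp).congr_deriv ?_
  have hinv : (((g x ^ (1 - α) : ℝ) : ℂ))⁻¹ = ((g x ^ (α - 1) : ℝ) : ℂ) := by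
    rw [← ofReal_inv, ← Real.rpow_neg hgx.le, neg_sub]
  rw [div_eq_mul_inv, hinv] at hode
  push_cast at hode ⊢
  linear_combination (exp (I * w * g x)) * hode

-- The paper's `𝒲[c₀, q₁]`; `levinPrimitive` is its `P`.
def levinW (w α : ℝ) (g g' : ℝ → ℝ) (c₀ : ℂ) (q₁ q₁' : ℝ → ℂ) (x : ℝ) : ℂ :=
  I * w * g' x * c₀ + g x * q₁' x + (1 + α + I * w * g x) * g' x * q₁ x

noncomputable def levinPrimitive (w α : ℝ) (g : ℝ → ℝ) (c₀ : ℂ) (q₁ h : ℝ → ℂ) (x : ℝ) : ℂ :=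
  (((g x ^ (1 + α) : ℝ) : ℂ) * q₁ x + c₀ * (1 - exp (-(I * w * g x))) * ((g x ^ α : ℝ) : ℂ)
    + h x) * exp (I * w * g x)

theorem continuousOn_levinPrimitive {s : Set ℝ} {w α : ℝ} {g : ℝ → ℝ} {c₀ : ℂ} {q₁ h : ℝ → ℂ}
    (hα : -1 < α) (hg : ContinuousOn g s) (hg_nonneg : ∀ x ∈ s, 0 ≤ g x)
    (hq₁ : ContinuousOn q₁ s) (hh : ContinuousOn h s) :
    ContinuousOn (levinPrimitive w α g c₀ q₁ h) s := by
  have hpow : ContinuousOn (fun x => ((g x ^ (1 + α) : ℝ) : ℂ)) s :=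
    continuous_ofReal.comp_continuousOn (hg.rpow_const fun _ _ => Or.inr (by linarith))
  have hmid := (continuousOn_mul_one_sub_exp_mul_rpow w c₀ hα).comp hg hg_nonneg
  exact (((hpow.mul hq₁).add hmid).add hh).mul (by fun_prop)

theorem hasDerivAt_levinPrimitive {w α x : ℝ} {g g' : ℝ → ℝ} {c₀ : ℂ} {q₁ q₁' h : ℝ → ℂ}
    {h'x : ℂ} (hgx : 0 < g x) (hg : HasDerivAt g (g' x) x) (hq₁ : HasDerivAt q₁ (q₁' x) x)
    (hh : HasDerivAt h h'x x)
    (hode : h'x + I * w * g' x * h x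
      + α * c₀ * g' x * ((1 - exp (-(I * w * g x))) / ((g x ^ (1 - α) : ℝ) : ℂ)) = 0) :
    HasDerivAt (levinPrimitive w α g c₀ q₁ h)
      (levinW w α g g' c₀ q₁ q₁' x * ((g x ^ α : ℝ) : ℂ) * exp (I * w * g x)) x := by
  have hsplit : levinPrimitive w α g c₀ q₁ h =
      (fun y => ((g y ^ (1 + α) : ℝ) : ℂ) * q₁ y * exp (I * w * g y)) + fun y =>
        (c₀ * (1 - exp (-(I * w * g y))) * ((g y ^ α : ℝ) : ℂ) + h y) * exp (I * w * g y) :=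
    funext fun y => by simp only [levinPrimitive, Pi.add_apply]; ring
  rw [hsplit]
  exact ((hasDerivAt_rpow_mul_mul_exp hgx hg hq₁).add
    (hasDerivAt_correction_mul_exp hgx hg hh hode)).congr_deriv (by simp only [levinW]; ring)

open Complex in
theorem stmt_11_general (a : ℝ) (ha : 0 < a) (w : ℝ)
    (α : ℝ) (hα : α ∈ Set.Ioo (-1 : ℝ) 1)
    (g g' : ℝ → ℝ)
    (hgderiv : ∀ x ∈ Set.Icc 0 a, HasDerivAt g (g' x) x)
    (hgc : ContinuousOn g' (Set.Icc 0 a))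
    (hg0 : g 0 = 0) (hgpos : ∀ x ∈ Set.Icc 0 a, 0 < g' x)
    (q₁ : ℝ → ℂ) (q₁' : ℝ → ℂ)
    (hq₁deriv : ∀ x ∈ Set.Icc 0 a, HasDerivAt q₁ (q₁' x) x)
    (hq₁c : ContinuousOn q₁' (Set.Icc 0 a))
    (c₀ : ℂ)
    (h h' : ℝ → ℂ)
    (hhc : ContinuousOn h (Set.Icc 0 a))
    (hhderiv : ∀ x ∈ Set.Ioc 0 a, HasDerivAt h (h' x) x)
    (hODE : ∀ x ∈ Set.Ioc 0 a,
      h' x + I * (w : ℂ) * (g' x : ℂ) * h x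
        + (α : ℂ) * c₀ * (g' x : ℂ) *
            ((1 - Complex.exp (-(I * (w : ℂ) * (g x : ℂ)))) / ((g x ^ (1 - α) : ℝ) : ℂ)) = 0)
    (P : ℝ → ℂ)
    (hP : ∀ x, P x =
      (((g x ^ (1 + α) : ℝ) : ℂ) * q₁ x
        + c₀ * (1 - Complex.exp (-(I * (w : ℂ) * (g x : ℂ)))) * ((g x ^ α : ℝ) : ℂ)
        + h x) * Complex.exp (I * (w : ℂ) * (g x : ℂ))) :
    P a - P 0 =
      ∫ x in (0 : ℝ)..a,
        (I * (w : ℂ) * (g' x : ℂ) * c₀ + (g x : ℂ) * q₁' x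
          + (1 + (α : ℂ) + I * (w : ℂ) * (g x : ℂ)) * (g' x : ℂ) * q₁ x)
          * ((g x ^ α : ℝ) : ℂ) * Complex.exp (I * (w : ℂ) * (g x : ℂ)) := by
  obtain ⟨m, L, hm, hbound⟩ := exists_mul_le_sub_le_mul_of_hasDerivAt_pos ha.le hgderiv hgc hgpos
  simp only [hg0, sub_zero] at hbound
  have hgcont : ContinuousOn g (Icc 0 a) := fun x hx =>
    (hgderiv x hx).continuousAt.continuousWithinAt
  have hq₁cont : ContinuousOn q₁ (Icc 0 a) := fun x hx =>
    (hq₁deriv x hx).continuousAt.continuousWithinAt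
  have hrpow : IntervalIntegrable (fun x => ((g x ^ α : ℝ) : ℂ)) volume 0 a := by
    have := intervalIntegrable_rpow_of_mul_le_of_le_mul hα.1 ha.le hm
      (hgcont.mono Ioc_subset_Icc_self) fun x hx => hbound x (Ioc_subset_Icc_self hx)
    exact ⟨this.1.ofReal, this.2.ofReal⟩
  have hWE :
      ContinuousOn (fun x => levinW w α g g' c₀ q₁ q₁' x * exp (I * w * g x)) (uIcc 0 a) := by
    rw [uIcc_of_le ha.le]; unfold levinW; fun_prop
  rw [show P = levinPrimitive w α g c₀ q₁ h from funext hP]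
  show _ = ∫ x in (0 : ℝ)..a,
    levinW w α g g' c₀ q₁ q₁' x * ((g x ^ α : ℝ) : ℂ) * exp (I * w * g x)
  refine (intervalIntegral.integral_eq_sub_of_hasDerivAt_of_le ha.le
    (continuousOn_levinPrimitive hα.1 hgcont
      (fun x hx => (mul_nonneg hm.le hx.1).trans (hbound x hx).1) hq₁cont hhc)
    (fun x hx => ?_) ((hrpow.continuousOn_mul hWE).congr fun x _ => by ring)).symm
  have hxIoc : x ∈ Ioc 0 a := Ioo_subset_Ioc_self hx
  have hxIcc : x ∈ Icc 0 a := Ioc_subset_Icc_self hxIoc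
  exact hasDerivAt_levinPrimitive ((mul_pos hm hx.1).trans_le (hbound x hxIcc).1)
    (hgderiv x hxIcc) (hq₁deriv x hxIcc) (hhderiv x hxIoc) (hODE x hxIoc)

open Complex in
/-- with `P = [g^{1+α} q₁ + c₀(1-e^{-iwg})g^α + h] e^{iwg}` and `h` solving the
singular ODE with `h 0 = 0`, one has
`P(a) - P(0) = ∫_0^a 𝒲[c₀,q₁](x) g(x)^α e^{iwg(x)} dx`, where
`𝒲[c₀,q₁] = iwg'c₀ + g q₁' + (1+α+iwg) g' q₁`. -/
theorem stmt_11 (a : ℝ) (ha : 0 < a) (w : ℝ) (hw : w ≠ 0)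
    (α : ℝ) (hα : α ∈ Set.Ioo (-1 : ℝ) 1) (hα0 : α ≠ 0)
    (g g' : ℝ → ℝ)
    (hgderiv : ∀ x ∈ Set.Icc 0 a, HasDerivAt g (g' x) x)
    (hgc : ContinuousOn g' (Set.Icc 0 a))
    (hg0 : g 0 = 0) (hgpos : ∀ x ∈ Set.Icc 0 a, 0 < g' x)
    (q₁ : ℝ → ℂ) (q₁' : ℝ → ℂ)
    (hq₁deriv : ∀ x ∈ Set.Icc 0 a, HasDerivAt q₁ (q₁' x) x)
    (hq₁c : ContinuousOn q₁' (Set.Icc 0 a))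
    (c₀ : ℂ)
    (h h' : ℝ → ℂ)
    (hhc : ContinuousOn h (Set.Icc 0 a))
    (hhderiv : ∀ x ∈ Set.Ioc 0 a, HasDerivAt h (h' x) x)
    (hh0 : h 0 = 0)
    (hODE : ∀ x ∈ Set.Ioc 0 a,
      h' x + I * (w : ℂ) * (g' x : ℂ) * h x
        + (α : ℂ) * c₀ * (g' x : ℂ) *
            ((1 - Complex.exp (-(I * (w : ℂ) * (g x : ℂ)))) / ((g x ^ (1 - α) : ℝ) : ℂ)) = 0)
    (P : ℝ → ℂ)
    (hP : ∀ x, P x =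
      (((g x ^ (1 + α) : ℝ) : ℂ) * q₁ x
        + c₀ * (1 - Complex.exp (-(I * (w : ℂ) * (g x : ℂ)))) * ((g x ^ α : ℝ) : ℂ)
        + h x) * Complex.exp (I * (w : ℂ) * (g x : ℂ))) :
    P a - P 0 =
      ∫ x in (0 : ℝ)..a,
        (I * (w : ℂ) * (g' x : ℂ) * c₀ + (g x : ℂ) * q₁' x
          + (1 + (α : ℂ) + I * (w : ℂ) * (g x : ℂ)) * (g' x : ℂ) * q₁ x)
          * ((g x ^ α : ℝ) : ℂ) * Complex.exp (I * (w : ℂ) * (g x : ℂ)) :=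
  stmt_11_general a ha w α hα g g' hgderiv hgc hg0 hgpos q₁ q₁' hq₁deriv hq₁c c₀ h h' hhc hhderiv
    hODE P hP
end Derivatives
end
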